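/- For T = L^m ⊆ (Z/4Z)^{2m} and x = (x₁,…,x_m) with each x_i ∈ (Z/4Z)^2, the coefficient [T·T]_x (number of pairs (a,b) ∈ T×T with a+b = x) equals 0 if some x_i lies outside Y ∪ I, and equals 2^l otherwise, where l = |{i : x_i ∈ I}|, Y = {(0,0),(0,2),(2,0),(2,2)} and I = {(0,1),(0,3),(1,0),(3,0),(1,1),(3,3)}. -/

import Mathlib

open Finset

abbrev G4 : Type := ZMod 4 × ZMod 4

def L : Finset G4 := {(0,0),(0,1),(1,0),(3,3)}

def Yset : Finset G4 := {(0,0),(0,2),(2,0),(2,2)}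

def Iset : Finset G4 := {(0,1),(0,3),(1,0),(3,0),(1,1),(3,3)}

/-- `T = L^m ⊆ ((ℤ/4ℤ)²)^m`. -/
def Tm (m : ℕ) : Finset (Fin m → G4) := Fintype.piFinset fun _ => L

/-- The coefficient `[A·A]_y`, i.e. the number of pairs `(a,b) ∈ A × A` with `a + b = y`. -/
def sumCount {G : Type*} [AddCommGroup G] [DecidableEq G] (A : Finset G) (y : G) : ℕ :=
  ((A ×ˢ A).filter fun p => p.1 + p.2 = y).card

/-! The coefficients of `T · T` factor over the coordinates, and in one coordinate a direct
count shows that `L + L` hits every element of `I` twice, every element of `Y` once and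
nothing else. -/

theorem sumCount_piFinset {ι G : Type*} [Fintype ι] [DecidableEq ι] [AddCommGroup G]
    [DecidableEq G] (A : ι → Finset G) (x : ι → G) :
    sumCount (Fintype.piFinset A) x = ∏ i, sumCount (A i) (x i) := by
  unfold sumCount
  rw [← Fintype.card_piFinset]
  refine card_nbij' (fun p i => (p.1 i, p.2 i)) (fun f => (fun i => (f i).1, fun i => (f i).2))
    ?_ ?_ (fun _ _ => rfl) (fun _ _ => rfl)
  · intro p hp
    simp only [mem_coe, mem_filter, mem_product, Fintype.mem_piFinset, funext_iff] at hp ⊢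
    exact fun i => ⟨⟨hp.1.1 i, hp.1.2 i⟩, hp.2 i⟩
  · intro f hf
    simp only [mem_coe, mem_filter, mem_product, Fintype.mem_piFinset, funext_iff] at hf ⊢
    exact ⟨⟨fun i => (hf i).1.1, fun i => (hf i).1.2⟩, fun i => (hf i).2⟩

theorem sumCount_L (y : G4) :
    sumCount L y = if y ∈ Iset then 2 else if y ∈ Yset then 1 else 0 := by
  revert y; decide

theorem stmt10 (m : ℕ) (x : Fin m → G4) :
    ((∃ i, x i ∉ Yset ∪ Iset) → sumCount (Tm m) x = 0) ∧
    ((∀ i, x i ∈ Yset ∪ Iset) →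
      sumCount (Tm m) x = 2 ^ (univ.filter fun i => x i ∈ Iset).card) := by
  rw [Tm, sumCount_piFinset]
  constructor
  · rintro ⟨i, hi⟩
    rw [mem_union, not_or] at hi
    exact prod_eq_zero (mem_univ i) (by rw [sumCount_L, if_neg hi.2, if_neg hi.1])
  · intro hx
    have hfactor : ∀ i ∈ univ, sumCount L (x i) = if x i ∈ Iset then 2 else 1 := by
      intro i _
      have hYI := mem_union.mp (hx i)
      rw [sumCount_L]
      split_ifs <;> simp_all
    rw [prod_congr rfl hfactor, prod_ite, prod_const, prod_const, one_pow, mul_one]
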